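/- arXiv:2008.04286 — 4 statements merged into one kernel-verified Lean document; each statement's English description precedes it below -/
import Mathlib

section
/- Let m ≥ 2 and ρ > 0 (standing for λ/μ). Then (1 + ρ e^{−m})(1 − e^{−m})/(1 − (m+1)e^{−m}) lies in the interval [1, 1 + 2(ρ + m + 1)e^{−m}]. -/
theorem stmt_5 (m ρ : ℝ) (hm : 2 ≤ m) (hρ : 0 < ρ) :
    (1 + ρ * Real.exp (-m)) * (1 - Real.exp (-m)) / (1 - (m + 1) * Real.exp (-m)) ∈
      Set.Icc (1 : ℝ) (1 + 2 * (ρ + m + 1) * Real.exp (-m)) := by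
  set E := Real.exp (-m) with hE
  have hE0 : 0 < E := Real.exp_pos _
  have hE1 : E < 1 := by
    rw [hE, Real.exp_lt_one_iff]; linarith
  -- key: (m+1) * E ≤ 1/2, i.e. 2*(m+1) ≤ exp m
  have hexp2 : (7 : ℝ) < Real.exp 2 := by
    have h1 : (2.7 : ℝ) < Real.exp 1 := by
      have := Real.exp_one_gt_d9
      linarith
    have h2 : Real.exp 2 = Real.exp 1 * Real.exp 1 := by
      rw [← Real.exp_add]; norm_num
    nlinarith
  have hsub : m - 1 ≤ Real.exp (m - 2) := by
    have := Real.add_one_le_exp (m - 2)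
    linarith
  have hkey : (m + 1) * E ≤ 1 / 2 := by
    have hEm : Real.exp m = Real.exp 2 * Real.exp (m - 2) := by
      rw [← Real.exp_add]; ring_nf
    have h2m : 2 * (m + 1) ≤ Real.exp m := by
      have hpos : (0 : ℝ) ≤ m - 1 := by linarith
      nlinarith [Real.exp_pos (m - 2)]
    have hEinv : E = (Real.exp m)⁻¹ := by
      rw [hE, Real.exp_neg]
    rw [hEinv]
    rw [mul_inv_le_iff₀ (Real.exp_pos m)]
    linarith
  have hD : (0 : ℝ) < 1 - (m + 1) * E := by linarith
  constructor
  · rw [le_div_iff₀ hD]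
    nlinarith [mul_pos hρ hE0, mul_pos (mul_pos hρ hE0) hE0]
  · rw [div_le_iff₀ hD]
    nlinarith [mul_pos hρ hE0, mul_pos (mul_pos hρ hE0) hE0,
      mul_le_of_le_one_right (le_of_lt hE0) (le_of_lt hE1),
      mul_le_mul_of_nonneg_left hkey (by linarith : (0:ℝ) ≤ 2 * (ρ + m + 1))]
end

section
/- Suppose m := (λ+μ)τ ≥ 2, λ, μ > 0, and P, Q, ε > 0 satisfy e^{−ε} ≤ P/p ≤ e^{ε}, e^{−ε} ≤ (1−P)/(1−p) ≤ e^{ε}, and e^{−ε} ≤ Q/q ≤ e^{ε}, where p := (λ/(λ+μ))(1−e^{−m}) and q := (1/(λ+μ))(1−(m+1)e^{−m})/(1−e^{−m}). Then e^{−2ε}λ ≤ P/Q ≤ e^{2ε}(1 + 2(m+1)e^{−m})λ and e^{−2ε}μ ≤ (1−P)/Q ≤ e^{2ε}(1 + 2(λ/μ + m + 1)e^{−m})μ. -/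
/-!
Multiplicative errors add under division, so `P / Q` and `(1 - P) / Q` approximate `p / q` and
`(1 - p) / q` within a factor `e^{2ε}`. Writing `E = e^{-m}`, one has
`p / q = λ (1 - E)² / (1 - (m + 1) E)` and `(1 - p) / q = (μ + λ E)(1 - E) / (1 - (m + 1) E)`,
so the remaining bounds are polynomial inequalities in `m` and `E`; they follow from
`(2m + 1) E ≤ 1` and `2 (m + 1)² E ≤ m + 2`, i.e. from Taylor lower bounds for `e^m`.
-/

open Real

def IsMulApprox (ε x y : ℝ) : Prop :=
  exp (-ε) ≤ x / y ∧ x / y ≤ exp ε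

namespace IsMulApprox

variable {ε δ x y a b : ℝ}

theorem div {x' y' : ℝ} (h : IsMulApprox ε x y) (h' : IsMulApprox δ x' y') :
    IsMulApprox (ε + δ) (x / x') (y / y') := by
  have hpos : 0 < x' / y' := (exp_pos _).trans_le h'.1
  rw [IsMulApprox, div_div_div_comm, neg_add, exp_add, exp_add, exp_neg δ, ← div_eq_mul_inv,
    ← div_inv_eq_mul, ← exp_neg]
  exact ⟨div_le_div₀ ((exp_pos _).le.trans h.1) h.1 hpos h'.2,
    div_le_div₀ (exp_pos _).le h.2 (exp_pos _) h'.1⟩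

theorem exp_neg_mul_le (h : IsMulApprox ε x y) (ha : 0 < a) (hay : a ≤ y) :
    exp (-ε) * a ≤ x := by
  have hy : 0 < y := ha.trans_le hay
  calc exp (-ε) * a ≤ exp (-ε) * y := by gcongr
    _ ≤ x := (le_div_iff₀ hy).mp h.1

theorem le_exp_mul (h : IsMulApprox ε x y) (hy : 0 < y) (hyb : y ≤ b) :
    x ≤ exp ε * b :=
  calc x ≤ exp ε * y := (div_le_iff₀ hy).mp h.2
    _ ≤ exp ε * b := by gcongr

end IsMulApprox

theorem add_one_mul_exp_neg_lt_one {x : ℝ} (hx : x ≠ 0) : (x + 1) * exp (-x) < 1 := by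
  rw [exp_neg, ← div_eq_mul_inv, div_lt_one (exp_pos x)]
  exact add_one_lt_exp hx

theorem two_mul_add_one_mul_exp_neg_le_one {x : ℝ} (hx : 2 ≤ x) :
    (2 * x + 1) * exp (-x) ≤ 1 := by
  rw [exp_neg, ← div_eq_mul_inv, div_le_one (exp_pos x)]
  nlinarith [quadratic_le_exp_of_nonneg (by linarith : (0 : ℝ) ≤ x)]

theorem two_mul_add_one_sq_mul_exp_neg_le {x : ℝ} (hx : 1 ≤ x) :
    2 * (x + 1) ^ 2 * exp (-x) ≤ x + 2 := by
  have hcubic : 1 + x + x ^ 2 / 2 + x ^ 3 / 6 ≤ exp x := by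
    have := sum_le_exp_of_nonneg (by linarith : (0 : ℝ) ≤ x) 4
    norm_num [Finset.sum_range_succ, Nat.factorial] at this
    linarith
  rw [exp_neg, ← div_eq_mul_inv, div_le_iff₀ (exp_pos x)]
  nlinarith [mul_le_mul_of_nonneg_left hcubic (by linarith : (0 : ℝ) ≤ x + 2),
    pow_le_pow_left₀ zero_le_one hx 3, pow_le_pow_left₀ zero_le_one hx 4]

noncomputable def sirP (lam mu m : ℝ) : ℝ := lam / (lam + mu) * (1 - exp (-m))

noncomputable def sirQ (lam mu m : ℝ) : ℝ :=
  1 / (lam + mu) * ((1 - (m + 1) * exp (-m)) / (1 - exp (-m)))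

section

variable {lam mu m : ℝ}

theorem sirP_div_sirQ (hS : lam + mu ≠ 0) (hm : m ≠ 0) :
    sirP lam mu m / sirQ lam mu m = lam * (1 - exp (-m)) ^ 2 / (1 - (m + 1) * exp (-m)) := by
  have hA : 1 - exp (-m) ≠ 0 := sub_ne_zero.mpr fun h ↦ hm (by simpa using h.symm)
  unfold sirP sirQ
  field_simp

theorem one_sub_sirP_div_sirQ (hS : lam + mu ≠ 0) (hm : m ≠ 0) :
    (1 - sirP lam mu m) / sirQ lam mu m =
      (mu + lam * exp (-m)) * (1 - exp (-m)) / (1 - (m + 1) * exp (-m)) := by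
  have hA : 1 - exp (-m) ≠ 0 := sub_ne_zero.mpr fun h ↦ hm (by simpa using h.symm)
  unfold sirP sirQ
  field_simp
  ring

theorem le_sirP_div_sirQ (hlam : 0 < lam) (hmu : 0 < mu) (hm : 1 ≤ m) :
    lam ≤ sirP lam mu m / sirQ lam mu m := by
  have hE := exp_pos (-m)
  have hD := add_one_mul_exp_neg_lt_one (by linarith : m ≠ 0)
  rw [sirP_div_sirQ (by linarith) (by linarith), le_div_iff₀ (by linarith)]
  have h : 0 ≤ (m - 1) * exp (-m) + exp (-m) ^ 2 := by positivity
  nlinarith [mul_nonneg hlam.le h]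

theorem sirP_div_sirQ_le (hlam : 0 < lam) (hmu : 0 < mu) (hm : 1 ≤ m) :
    sirP lam mu m / sirQ lam mu m ≤ (1 + 2 * (m + 1) * exp (-m)) * lam := by
  have hE := exp_pos (-m)
  have hE1 : exp (-m) ≤ 1 := exp_le_one_iff.mpr (by linarith)
  have hD := add_one_mul_exp_neg_lt_one (by linarith : m ≠ 0)
  have key := two_mul_add_one_sq_mul_exp_neg_le hm
  rw [sirP_div_sirQ (by linarith) (by linarith), div_le_iff₀ (by linarith)]
  have h : (1 + 2 * (m + 1) ^ 2) * exp (-m) ≤ m + 3 := by linarith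
  nlinarith [mul_nonneg (mul_pos hlam hE).le (sub_nonneg.mpr h)]

theorem le_one_sub_sirP_div_sirQ (hlam : 0 < lam) (hmu : 0 < mu) (hm : 0 < m) :
    mu ≤ (1 - sirP lam mu m) / sirQ lam mu m := by
  have hE := exp_pos (-m)
  have hE1 : exp (-m) < 1 := exp_lt_one_iff.mpr (by linarith)
  have hD := add_one_mul_exp_neg_lt_one hm.ne'
  rw [one_sub_sirP_div_sirQ (by linarith) hm.ne', le_div_iff₀ (by linarith)]
  nlinarith [mul_pos (mul_pos hlam hE) (sub_pos.mpr hE1), mul_pos (mul_pos hm hmu) hE]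

theorem one_sub_sirP_div_sirQ_le (hlam : 0 < lam) (hmu : 0 < mu) (hm : 2 ≤ m) :
    (1 - sirP lam mu m) / sirQ lam mu m ≤ (1 + 2 * (lam / mu + m + 1) * exp (-m)) * mu := by
  have hE := exp_pos (-m)
  have hD := add_one_mul_exp_neg_lt_one (by linarith : m ≠ 0)
  have hlin := two_mul_add_one_mul_exp_neg_le_one hm
  have hsq := two_mul_add_one_sq_mul_exp_neg_le (by linarith : 1 ≤ m)
  have hc : (1 + 2 * (lam / mu + m + 1) * exp (-m)) * mu =
      mu + 2 * (lam + (m + 1) * mu) * exp (-m) := by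
    field_simp
    ring
  rw [one_sub_sirP_div_sirQ (by linarith) (by linarith), div_le_iff₀ (by linarith), hc]
  nlinarith [mul_le_mul_of_nonneg_right hlin (mul_pos hlam hE).le,
    mul_le_mul_of_nonneg_right hsq (mul_pos hmu hE).le]

end

theorem stmt_6_general (lam mu ε P Q : ℝ) (hlam : 0 < lam) (hmu : 0 < mu)
    (m p q : ℝ) (hm2 : 2 ≤ m)
    (hp : p = (lam / (lam + mu)) * (1 - Real.exp (-m)))
    (hq : q = (1 / (lam + mu)) * ((1 - (m + 1) * Real.exp (-m)) / (1 - Real.exp (-m))))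
    (hP1 : Real.exp (-ε) ≤ P / p) (hP2 : P / p ≤ Real.exp ε)
    (hP3 : Real.exp (-ε) ≤ (1 - P) / (1 - p)) (hP4 : (1 - P) / (1 - p) ≤ Real.exp ε)
    (hQ1 : Real.exp (-ε) ≤ Q / q) (hQ2 : Q / q ≤ Real.exp ε) :
    Real.exp (-(2 * ε)) * lam ≤ P / Q ∧
      P / Q ≤ Real.exp (2 * ε) * (1 + 2 * (m + 1) * Real.exp (-m)) * lam ∧
      Real.exp (-(2 * ε)) * mu ≤ (1 - P) / Q ∧
      (1 - P) / Q ≤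
        Real.exp (2 * ε) * (1 + 2 * (lam / mu + m + 1) * Real.exp (-m)) * mu := by
  have hQ : IsMulApprox ε Q q := ⟨hQ1, hQ2⟩
  have hPQ : IsMulApprox (2 * ε) (P / Q) (p / q) :=
    two_mul ε ▸ IsMulApprox.div ⟨hP1, hP2⟩ hQ
  have hPQ' : IsMulApprox (2 * ε) ((1 - P) / Q) ((1 - p) / q) :=
    two_mul ε ▸ IsMulApprox.div ⟨hP3, hP4⟩ hQ
  subst hp hq
  have hlo := le_sirP_div_sirQ hlam hmu (by linarith : 1 ≤ m)
  have hlo' := le_one_sub_sirP_div_sirQ hlam hmu (by linarith : 0 < m)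
  rw [mul_assoc _ _ lam, mul_assoc _ _ mu]
  exact ⟨hPQ.exp_neg_mul_le hlam hlo,
    hPQ.le_exp_mul (hlam.trans_le hlo) (sirP_div_sirQ_le hlam hmu (by linarith)),
    hPQ'.exp_neg_mul_le hmu hlo',
    hPQ'.le_exp_mul (hmu.trans_le hlo') (one_sub_sirP_div_sirQ_le hlam hmu hm2)⟩

theorem stmt_6 (lam mu tau ε P Q : ℝ) (hlam : 0 < lam) (hmu : 0 < mu) (htau : 0 < tau)
    (hε : 0 < ε) (hP : 0 < P) (hQ : 0 < Q)
    (m p q : ℝ) (hm : m = (lam + mu) * tau) (hm2 : 2 ≤ m)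
    (hp : p = (lam / (lam + mu)) * (1 - Real.exp (-m)))
    (hq : q = (1 / (lam + mu)) * ((1 - (m + 1) * Real.exp (-m)) / (1 - Real.exp (-m))))
    (hP1 : Real.exp (-ε) ≤ P / p) (hP2 : P / p ≤ Real.exp ε)
    (hP3 : Real.exp (-ε) ≤ (1 - P) / (1 - p)) (hP4 : (1 - P) / (1 - p) ≤ Real.exp ε)
    (hQ1 : Real.exp (-ε) ≤ Q / q) (hQ2 : Q / q ≤ Real.exp ε) :
    Real.exp (-(2 * ε)) * lam ≤ P / Q ∧
      P / Q ≤ Real.exp (2 * ε) * (1 + 2 * (m + 1) * Real.exp (-m)) * lam ∧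
      Real.exp (-(2 * ε)) * mu ≤ (1 - P) / Q ∧
      (1 - P) / Q ≤
        Real.exp (2 * ε) * (1 + 2 * (lam / mu + m + 1) * Real.exp (-m)) * mu :=
  stmt_6_general lam mu ε P Q hlam hmu m p q hm2 hp hq hP1 hP2 hP3 hP4 hQ1 hQ2
end

section
/- Let R ~ Exp(μ) and I₁, …, I_{d−1} i.i.d. Exp(λ) independent of R, with λ, μ > 0 and integer d ≥ 3. Let X count the indices i with I_i < R. Then P{X ≤ 1} = (d−1)·μ/(μ + (d−2)λ) − (d−2)·μ/(μ + (d−1)λ). -/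
/-!
Let `A i = {R ≤ I i}` be the event that child `i` escapes infection. Conditioning on `R = r`,
independence gives `P(⋂_{i ∈ s} A i) = ∫ e^{-|s|λr} μ e^{-μr} dr = μ / (μ + |s|λ)`.
The event `X ≤ 1` is the disjoint union of `⋂ A i` and, for each `i`, of
`(A i)ᶜ ∩ ⋂_{j ≠ i} A j`, whose probability is `P(⋂_{j ≠ i} A j) - P(⋂ A j)`.
Summing over the `d - 1` children gives `(d - 1) μ/(μ + (d-2)λ) - (d - 2) μ/(μ + (d-1)λ)`.
-/

open MeasureTheory ProbabilityTheory

namespace ProbabilityTheory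

open Set

lemma expMeasure_Ici {a : ℝ} (ha : 0 < a) (r : ℝ) :
    expMeasure a (Ici r) = ENNReal.ofReal (Real.exp (-(a * max r 0))) := by
  have := isProbabilityMeasure_expMeasure ha
  have hIio : expMeasure a (Iio r)
      = ENNReal.ofReal (if 0 ≤ r then 1 - Real.exp (-(a * r)) else 0) := by
    rw [← cdf_expMeasure_eq ha, ofReal_cdf]
    exact measure_congr ((withDensity_absolutelyContinuous _ _).ae_eq Iio_ae_eq_Iic)
  rw [← compl_Iio, prob_compl_eq_one_sub measurableSet_Iio, hIio]
  split_ifs with hr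
  · have he : Real.exp (-(a * r)) ≤ 1 := Real.exp_le_one_iff.mpr (by nlinarith)
    rw [max_eq_left hr, ← ENNReal.ofReal_one, ← ENNReal.ofReal_sub _ (by linarith)]
    norm_num
  · simp [max_eq_right (le_of_not_ge hr)]

lemma exponentialPDF_mul_exp_neg_mul_max {μ c : ℝ} (hμc : 0 < μ + c) (r : ℝ) :
    exponentialPDF μ r * ENNReal.ofReal (Real.exp (-(c * max r 0)))
      = ENNReal.ofReal (μ / (μ + c)) * exponentialPDF (μ + c) r := by
  rcases lt_or_ge r 0 with hr | hr
  · simp [exponentialPDF_of_neg hr]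
  · rw [exponentialPDF_of_nonneg hr, exponentialPDF_of_nonneg hr, max_eq_left hr,
      ← ENNReal.ofReal_mul' (Real.exp_pos _).le, ← ENNReal.ofReal_mul' (by positivity)]
    congr 1
    field_simp
    rw [mul_assoc, ← Real.exp_add]
    ring_nf

lemma measurable_exponentialPDF (r : ℝ) : Measurable (exponentialPDF r) :=
  (measurable_exponentialPDFReal r).ennreal_ofReal

lemma lintegral_exp_neg_mul_max_expMeasure {μ c : ℝ} (hμ : 0 < μ) (hc : 0 ≤ c) :
    ∫⁻ r, ENNReal.ofReal (Real.exp (-(c * max r 0))) ∂expMeasure μ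
      = ENNReal.ofReal (μ / (μ + c)) := by
  have hμc : 0 < μ + c := by linarith
  rw [show expMeasure μ = volume.withDensity (exponentialPDF μ) from rfl,
    lintegral_withDensity_eq_lintegral_mul _ (measurable_exponentialPDF μ) (by fun_prop)]
  simp only [Pi.mul_apply, exponentialPDF_mul_exp_neg_mul_max hμc]
  rw [lintegral_const_mul _ (measurable_exponentialPDF _), lintegral_exponentialPDF_eq_one hμc,
    mul_one]

variable {Ω : Type*} [MeasurableSpace Ω] {P : Measure Ω}

lemma map_eq_expMeasure_of_cdf [IsProbabilityMeasure P] {a : ℝ} (ha : 0 < a) {Y : Ω → ℝ}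
    (hY : Measurable Y)
    (hcdf : ∀ t : ℝ, 0 ≤ t → P {ω | Y ω ≤ t} = ENNReal.ofReal (1 - Real.exp (-a * t))) :
    P.map Y = expMeasure a := by
  have := isProbabilityMeasure_expMeasure ha
  have := Measure.isProbabilityMeasure_map (μ := P) hY.aemeasurable
  refine Measure.ext_of_Iic _ _ fun t => ?_
  rw [Measure.map_apply hY measurableSet_Iic, ← ofReal_cdf, cdf_expMeasure_eq ha]
  change P {ω | Y ω ≤ t} = _
  split_ifs with ht
  · simpa using hcdf t ht
  · rw [ENNReal.ofReal_zero]
    refine measure_mono_null (fun ω (hω : Y ω ≤ t) => ?_) ((hcdf 0 le_rfl).trans (by simp))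
    exact hω.trans (le_of_not_ge ht)

lemma IndepFun.measure_preimage_eq_lintegral [IsFiniteMeasure P] {β γ : Type*}
    [MeasurableSpace β] [MeasurableSpace γ] {X : Ω → β} {Y : Ω → γ} (hXY : IndepFun X Y P)
    (hX : Measurable X) (hY : Measurable Y) {S : Set (β × γ)} (hS : MeasurableSet S) :
    P ((fun ω => (X ω, Y ω)) ⁻¹' S) = ∫⁻ x, P.map Y (Prod.mk x ⁻¹' S) ∂P.map X := by
  rw [← Measure.map_apply (hX.prodMk hY) hS,
    (indepFun_iff_map_prod_eq_prod_map_map hX.aemeasurable hY.aemeasurable).mp hXY,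
    Measure.prod_apply hS]

lemma iIndepFun.indepFun_sumElim_unit {ι β : Type*} [Fintype ι] [MeasurableSpace β]
    {f : ι → Ω → β} {g : Ω → β} (hf : ∀ i, Measurable (f i)) (hg : Measurable g)
    (h : iIndepFun (Sum.elim f fun _ : Unit => g) P) :
    IndepFun g (fun ω i => f i ω) P := by
  classical
  have hmeas : ∀ j, Measurable (Sum.elim f (fun _ : Unit => g) j) := by
    rintro (i | u)
    exacts [hf i, hg]
  have := h.indepFun_finset {Sum.inr ()} (Finset.univ.image Sum.inl) (by simp) hmeas
  exact this.comp (measurable_pi_apply ⟨Sum.inr (), by simp⟩)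
    (measurable_pi_lambda _ fun i => measurable_pi_apply ⟨Sum.inl i, by simp⟩)

lemma iIndepFun.measure_biInter_preimage_Ici_eq_exp {ι : Type*} {I : ι → Ω → ℝ}
    (hI : iIndepFun I P) {lam : ℝ} (hlam : 0 < lam) (hImap : ∀ i, P.map (I i) = expMeasure lam)
    (hImeas : ∀ i, Measurable (I i)) (s : Finset ι) (r : ℝ) :
    P (⋂ j ∈ s, I j ⁻¹' Ici r) = ENNReal.ofReal (Real.exp (-(s.card * lam * max r 0))) := by
  have htail : ∀ j, P (I j ⁻¹' Ici r) = ENNReal.ofReal (Real.exp (-(lam * max r 0))) :=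
    fun j => by rw [← Measure.map_apply (hImeas j) measurableSet_Ici, hImap, expMeasure_Ici hlam]
  rw [hI.meas_biInter fun j _ => ⟨Ici r, measurableSet_Ici, rfl⟩]
  simp only [htail, Finset.prod_const, ← ENNReal.ofReal_pow (Real.exp_pos _).le,
    ← Real.exp_nat_mul]
  ring_nf

lemma measure_biInter_le_eq_div {ι : Type*} [Fintype ι] [IsProbabilityMeasure P] {lam mu : ℝ}
    (hlam : 0 < lam) (hmu : 0 < mu) {R : Ω → ℝ} {I : ι → Ω → ℝ} (hR : Measurable R)
    (hI : ∀ i, Measurable (I i)) (hRmap : P.map R = expMeasure mu)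
    (hImap : ∀ i, P.map (I i) = expMeasure lam)
    (hindep : iIndepFun (Sum.elim I fun _ : Unit => R) P) (s : Finset ι) :
    P (⋂ j ∈ s, {ω | R ω ≤ I j ω}) = ENNReal.ofReal (mu / (mu + s.card * lam)) := by
  set S : Set (ℝ × (ι → ℝ)) := ⋂ j ∈ s, {p | p.1 ≤ p.2 j}
  have hS : MeasurableSet S := Finset.measurableSet_biInter s fun j _ =>
    measurableSet_le measurable_fst ((measurable_pi_apply j).comp measurable_snd)
  have hV : Measurable fun ω i => I i ω := measurable_pi_lambda _ hI
  calc P (⋂ j ∈ s, {ω | R ω ≤ I j ω})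
      = P ((fun ω => (R ω, fun i => I i ω)) ⁻¹' S) := by simp [S, preimage_iInter₂]
    _ = ∫⁻ r, P.map (fun ω i => I i ω) (Prod.mk r ⁻¹' S) ∂P.map R :=
        (hindep.indepFun_sumElim_unit hI hR).measure_preimage_eq_lintegral hR hV hS
    _ = ∫⁻ r, ENNReal.ofReal (Real.exp (-(s.card * lam * max r 0))) ∂expMeasure mu := by
        rw [hRmap]
        congr with r
        rw [Measure.map_apply hV (measurable_prodMk_left hS), ← (hindep.precomp
          Sum.inl_injective).measure_biInter_preimage_Ici_eq_exp hlam hImap hI s r]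
        simp only [S, preimage_iInter₂]
        rfl
    _ = ENNReal.ofReal (mu / (mu + s.card * lam)) :=
        lintegral_exp_neg_mul_max_expMeasure hmu (by positivity)

end ProbabilityTheory

namespace MeasureTheory

open Set

open Classical in
/-- Stated additively: the natural identity has a subtraction, which truncates in `ℝ≥0∞`. -/
lemma measure_card_notMem_le_one_add {Ω ι : Type*} [MeasurableSpace Ω] [Fintype ι]
    [DecidableEq ι] (P : Measure Ω) {A : ι → Set Ω} (hA : ∀ i, MeasurableSet (A i)) :
    P {ω | (Finset.univ.filter fun i => ω ∉ A i).card ≤ 1}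
        + Fintype.card ι • P (⋂ i, A i)
      = P (⋂ i, A i) + ∑ i, P (⋂ j ∈ Finset.univ.erase i, A j) := by
  set B : ι → Set Ω := fun i => (A i)ᶜ ∩ ⋂ j ∈ Finset.univ.erase i, A j
  have hB : ∀ i, MeasurableSet (B i) := fun i =>
    (hA i).compl.inter (Finset.measurableSet_biInter _ fun j _ => hA j)
  have hdisj : ∀ i, Disjoint (⋂ j, A j) (B i) := fun i =>
    disjoint_left.2 fun ω hω hωB => hωB.1 (mem_iInter.1 hω i)
  have hBdisj : Pairwise (Function.onFun Disjoint B) := fun i j hij =>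
    disjoint_left.2 fun ω hωi hωj => hωi.1 (mem_iInter₂.1 hωj.2 i (by simp [hij]))
  have hsplit :
      {ω | (Finset.univ.filter fun i => ω ∉ A i).card ≤ 1} = (⋂ j, A j) ∪ ⋃ i, B i := by
    ext ω
    simp only [Finset.card_le_one, Finset.mem_filter, Finset.mem_univ, true_and,
      mem_union, mem_iInter, mem_iUnion, B, mem_inter_iff, mem_compl_iff, Finset.mem_erase,
      ne_eq, and_true]
    constructor
    · intro h
      refine or_iff_not_imp_left.2 fun hnone => ?_
      obtain ⟨i, hi⟩ := not_forall.1 hnone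
      exact ⟨i, hi, fun j hj => by_contra fun hj' => hj (h j hj' i hi)⟩
    · rintro (h | ⟨k, -, hk⟩) a ha b hb
      · exact absurd (h a) ha
      · exact (of_not_not (mt (hk a) ha)).trans (of_not_not (mt (hk b) hb)).symm
  have herase : ∀ i, P (⋂ j ∈ Finset.univ.erase i, A j) = P (⋂ j, A j) + P (B i) := by
    intro i
    have : ⋂ j ∈ Finset.univ.erase i, A j = (⋂ j, A j) ∪ B i := by
      ext ω
      simp only [mem_iInter, mem_union, B, mem_inter_iff, mem_compl_iff, Finset.mem_erase,
        Finset.mem_univ, and_true, ne_eq]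
      constructor
      · intro h
        by_cases hi : ω ∈ A i
        · exact Or.inl fun j => if hj : j = i then hj ▸ hi else h j hj
        · exact Or.inr ⟨hi, h⟩
      · rintro (h | ⟨-, h⟩) j hj
        exacts [h j, h j hj]
    rw [this, measure_union (hdisj i) (hB i)]
  rw [hsplit, measure_union (disjoint_iUnion_right.2 hdisj) (MeasurableSet.iUnion hB),
    measure_iUnion hBdisj hB, tsum_fintype, Finset.sum_congr rfl fun i _ => herase i,
    Finset.sum_add_distrib, Finset.sum_const, Finset.card_univ]
  ring

end MeasureTheory

lemma ENNReal.eq_ofReal_sub_of_add_ofReal_eq {x : ENNReal} {p q : ℝ} (hp : 0 ≤ p)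
    (h : x + ENNReal.ofReal p = ENNReal.ofReal q) : x = ENNReal.ofReal (q - p) := by
  rw [ENNReal.ofReal_sub _ hp]
  exact ENNReal.eq_sub_of_add_eq ENNReal.ofReal_ne_top h

theorem stmt_11 {Ω : Type*} [MeasurableSpace Ω] (Pr : Measure Ω) [IsProbabilityMeasure Pr]
    (lam mu : ℝ) (hlam : 0 < lam) (hmu : 0 < mu) (d : ℕ) (hd : 3 ≤ d)
    (R : Ω → ℝ) (I : Fin (d - 1) → Ω → ℝ)
    (hRmeas : Measurable R) (hImeas : ∀ i, Measurable (I i))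
    (hRdist : ∀ t : ℝ, 0 ≤ t → Pr {ω | R ω ≤ t} = ENNReal.ofReal (1 - Real.exp (-mu * t)))
    (hIdist : ∀ i, ∀ t : ℝ, 0 ≤ t →
      Pr {ω | I i ω ≤ t} = ENNReal.ofReal (1 - Real.exp (-lam * t)))
    (hindep : iIndepFun
      (Sum.elim (fun i : Fin (d - 1) => I i) (fun _ : Unit => R)) Pr)
    (X : Ω → ℕ) (hX : ∀ ω, X ω = (Finset.univ.filter fun i : Fin (d - 1) => I i ω < R ω).card) :
    Pr {ω | X ω ≤ 1} =
      ENNReal.ofReal (((d : ℝ) - 1) * (mu / (mu + ((d : ℝ) - 2) * lam)) -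
        ((d : ℝ) - 2) * (mu / (mu + ((d : ℝ) - 1) * lam))) := by
  set a := mu / (mu + ((d : ℝ) - 1) * lam)
  set b := mu / (mu + ((d : ℝ) - 2) * lam)
  have hd1 : ((d - 1 : ℕ) : ℝ) = d - 1 := by rw [Nat.cast_sub (by omega), Nat.cast_one]
  have hd2 : ((d - 1 - 1 : ℕ) : ℝ) = d - 2 := by
    rw [Nat.cast_sub (by omega), hd1]
    ring
  have hescape := measure_biInter_le_eq_div hlam hmu hRmeas hImeas
    (map_eq_expMeasure_of_cdf hmu hRmeas hRdist)
    (fun i => map_eq_expMeasure_of_cdf hlam (hImeas i) (hIdist i)) hindep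
  have hescapeAll : Pr (⋂ i, {ω | R ω ≤ I i ω}) = ENNReal.ofReal a := by
    simpa [hd1] using hescape Finset.univ
  have hescapeAllBut (i : Fin (d - 1)) :
      Pr (⋂ j ∈ Finset.univ.erase i, {ω | R ω ≤ I j ω}) = ENNReal.ofReal b := by
    rw [hescape, Finset.card_erase_of_mem (Finset.mem_univ i), Finset.card_univ,
      Fintype.card_fin, hd2]
  have hcount := measure_card_notMem_le_one_add Pr fun i => measurableSet_le hRmeas (hImeas i)
  simp only [Set.mem_ofPred_eq, not_le, ← hX, hescapeAll, hescapeAllBut, Finset.sum_const,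
    Finset.card_univ, Fintype.card_fin, nsmul_eq_mul, ← ENNReal.ofReal_natCast, hd1] at hcount
  have hd3 : (3 : ℝ) ≤ d := by exact_mod_cast hd
  have ha : 0 ≤ a := div_nonneg hmu.le (by nlinarith)
  have hb : 0 ≤ b := div_nonneg hmu.le (by nlinarith)
  rw [← ENNReal.ofReal_mul (by linarith), ← ENNReal.ofReal_mul (by linarith),
    ← ENNReal.ofReal_add ha (by nlinarith)] at hcount
  rw [ENNReal.eq_ofReal_sub_of_add_ofReal_eq (by nlinarith) hcount]
  ring_nf
end

section
/- In the unit-rate growth process on the infinite d-ary tree (each vertex outside the current subtree whose parent is in the subtree is added at rate 1, starting from the root), let B_m be the first time a vertex at distance m from the root is added. Then P{B_m ≤ m/(2ed)} ≤ e^{−m/2}. -/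
/-!
Along a fixed path from the root to depth `m` the waiting times are `m` independent `Exp(1)`
variables `X`, each with `E[e^{-θX}] = 1/(1+θ) ≤ 1/θ`, so the Chernoff bound gives
`P{X₁ + ⋯ + Xₘ ≤ ε} ≤ e^{θε} θ^{-m}`. A union bound over the `d^m` paths, with `θ = ed` and
`ε = m/(2ed)`, yields `d^m e^{m/2} (ed)^{-m} = e^{-m/2}`.
-/

open MeasureTheory ProbabilityTheory Real

section ExponentialLaw

variable {Ω : Type*} [MeasurableSpace Ω] {μ : Measure Ω} {X : Ω → ℝ} {r : ℝ}

lemma mgf_id_expMeasure {t : ℝ} (hr : 0 < r) (ht : t < r) :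
    mgf id (expMeasure r) t = r / (r - t) := by
  have hmeas : Measurable (exponentialPDF r) := (measurable_exponentialPDFReal r).ennreal_ofReal
  change ∫ x, exp (t * x) ∂volume.withDensity (exponentialPDF r) = _
  rw [integral_withDensity_eq_integral_toReal_smul hmeas
      (Filter.Eventually.of_forall fun _ => ENNReal.ofReal_lt_top),
    ← setIntegral_eq_integral_of_forall_compl_eq_zero (s := Set.Ici 0) fun x hx => by
      rw [exponentialPDF_of_neg (not_le.mp hx), ENNReal.toReal_zero, zero_smul],
    integral_Ici_eq_integral_Ioi]
  calc ∫ x in Set.Ioi 0, (exponentialPDF r x).toReal • exp (t * x)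
      = ∫ x in Set.Ioi 0, r * exp ((t - r) * x) := by
        refine setIntegral_congr_fun measurableSet_Ioi fun x hx => ?_
        rw [exponentialPDF_of_nonneg hx.le, ENNReal.toReal_ofReal (by positivity),
          smul_eq_mul, mul_assoc, ← exp_add]
        congr 2
        ring
    _ = r / (r - t) := by
        rw [integral_const_mul, integral_exp_mul_Ioi (by linarith), mul_zero, exp_zero, neg_div,
          ← div_neg, neg_sub, mul_one_div]

lemma map_eq_expMeasure_of_cdf [IsProbabilityMeasure μ] (hr : 0 < r) (hX : Measurable X)
    (hcdf : ∀ t, 0 ≤ t → μ {ω | X ω ≤ t} = ENNReal.ofReal (1 - exp (-(r * t)))) :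
    μ.map X = expMeasure r := by
  have := isProbabilityMeasure_expMeasure hr
  refine Measure.ext_of_Iic _ _ fun a => ?_
  rw [Measure.map_apply hX measurableSet_Iic, ← ofReal_cdf, cdf_expMeasure_eq hr]
  split_ifs with ha
  · exact hcdf a ha
  · have h0 : μ {ω | X ω ≤ 0} = 0 := by simpa using hcdf 0 le_rfl
    rw [ENNReal.ofReal_zero, ← nonpos_iff_eq_zero, ← h0]
    exact measure_mono fun ω (hω : X ω ≤ a) => (hω.trans (not_le.mp ha).le :)

lemma mgf_eq_of_map_eq_expMeasure (hr : 0 < r) (hX : Measurable X) (hlaw : μ.map X = expMeasure r)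
    {t : ℝ} (ht : t < r) : mgf X μ t = r / (r - t) := by
  rw [← mgf_id_map hX.aemeasurable, hlaw, mgf_id_expMeasure hr ht]

lemma integrable_exp_mul_of_map_eq_expMeasure [IsProbabilityMeasure μ] (hr : 0 < r)
    (hX : Measurable X) (hlaw : μ.map X = expMeasure r) {t : ℝ} (ht : t < r) :
    Integrable (fun ω => exp (t * X ω)) μ := by
  rw [← mgf_pos_iff, mgf_eq_of_map_eq_expMeasure hr hX hlaw ht]
  exact div_pos hr (sub_pos.mpr ht)

lemma mgf_neg_le_of_map_eq_expMeasure (hr : 0 < r) (hX : Measurable X)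
    (hlaw : μ.map X = expMeasure r) {θ : ℝ} (hθ : 0 < θ) : mgf X μ (-θ) ≤ r / θ := by
  rw [mgf_eq_of_map_eq_expMeasure hr hX hlaw (by linarith), sub_neg_eq_add]
  exact div_le_div_of_nonneg_left hr.le hθ (by linarith)

end ExponentialLaw

section LowerTail

variable {Ω ι : Type*} [MeasurableSpace Ω] {μ : Measure Ω}

lemma measureReal_sum_le_le_of_mgf_le [IsFiniteMeasure μ] {X : ι → Ω → ℝ}
    (hindep : iIndepFun X μ) (hmeas : ∀ i, Measurable (X i)) (s : Finset ι) {θ c : ℝ}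
    (hθ : 0 ≤ θ) (hint : ∀ i ∈ s, Integrable (fun ω => exp (-θ * X i ω)) μ)
    (hmgf : ∀ i ∈ s, mgf (X i) μ (-θ) ≤ c) (ε : ℝ) :
    μ.real {ω | ∑ i ∈ s, X i ω ≤ ε} ≤ exp (θ * ε) * c ^ s.card := by
  have hprod : mgf (∑ i ∈ s, X i) μ (-θ) ≤ c ^ s.card := by
    rw [hindep.mgf_sum hmeas, ← Finset.prod_const]
    exact Finset.prod_le_prod (fun i _ => mgf_nonneg) hmgf
  have hchernoff := measure_le_le_exp_mul_mgf ε (neg_nonpos.mpr hθ)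
    (hindep.integrable_exp_mul_sum hmeas hint)
  simp only [Finset.sum_apply, neg_neg] at hchernoff hprod
  exact hchernoff.trans (mul_le_mul_of_nonneg_left hprod (exp_nonneg _))

lemma measure_iInf_le_le_sum [Fintype ι] [Nonempty ι] (S : ι → Ω → ℝ) (ε : ℝ) :
    μ {ω | ⨅ i, S i ω ≤ ε} ≤ ∑ i, μ {ω | S i ω ≤ ε} := by
  refine (measure_mono fun ω (hω : ⨅ i, S i ω ≤ ε) => ?_).trans (measure_iUnion_fintype_le μ _)
  obtain ⟨i, hi⟩ := exists_eq_ciInf_of_finite (f := fun i => S i ω)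
  exact Set.mem_iUnion.mpr ⟨i, (hi.trans_le hω :)⟩

end LowerTail

def pathVertex {d m : ℕ} (f : Fin m → Fin d) (k : Fin m) : Σ n : ℕ, (Fin n → Fin d) :=
  ⟨k + 1, fun j => f (Fin.castLE k.isLt j)⟩

lemma pathVertex_injective {d m : ℕ} (f : Fin m → Fin d) : Function.Injective (pathVertex f) :=
  fun k l h => Fin.ext (by simpa [pathVertex] using congrArg Sigma.fst h)

/-- Vertices at depth `n ≥ 1` are the paths `Fin n → Fin d`, and `E v` is the `Exp(1)` time `v`
waits after its parent is added; so `B` is the least sum of waiting times along a path from the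
root to depth `m`. -/
theorem stmt_17 {Ω : Type*} [MeasurableSpace Ω] (Pr : Measure Ω) [IsProbabilityMeasure Pr]
    (d : ℕ) (hd : 2 ≤ d)
    (E : (Σ n : ℕ, (Fin n → Fin d)) → Ω → ℝ) (hEmeas : ∀ v, Measurable (E v))
    (hindep : iIndepFun E Pr)
    (hEdist : ∀ v, ∀ t : ℝ, 0 ≤ t → Pr {ω | E v ω ≤ t} = ENNReal.ofReal (1 - Real.exp (-t)))
    (m : ℕ) (B : Ω → ℝ)
    (hB : ∀ ω, B ω = ⨅ f : Fin m → Fin d,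
      ∑ k : Fin m, E ⟨(k : ℕ) + 1, fun j => f (Fin.castLE k.isLt j)⟩ ω) :
    Pr {ω | B ω ≤ (m : ℝ) / (2 * Real.exp 1 * d)} ≤ ENNReal.ofReal (Real.exp (-(m : ℝ) / 2)) := by
  have hd0 : (0 : ℝ) < d := by exact_mod_cast (by omega : 0 < d)
  set θ := exp 1 * d with hθ_def
  have hθ : 0 < θ := by positivity
  set ε := (m : ℝ) / (2 * exp 1 * d) with hε_def
  have hlaw : ∀ v, Pr.map (E v) = expMeasure 1 := fun v =>
    map_eq_expMeasure_of_cdf one_pos (hEmeas v) fun t ht => by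
      simpa only [one_mul] using hEdist v t ht
  have hpath : ∀ f : Fin m → Fin d,
      Pr {ω | ∑ k, E (pathVertex f k) ω ≤ ε} ≤ ENNReal.ofReal (exp (θ * ε) * (1 / θ) ^ m) := by
    intro f
    rw [ENNReal.le_ofReal_iff_toReal_le (measure_ne_top _ _) (by positivity)]
    simpa [measureReal_def] using
      measureReal_sum_le_le_of_mgf_le (hindep.precomp (pathVertex_injective f))
        (fun k => hEmeas _) Finset.univ hθ.le
        (fun k _ => integrable_exp_mul_of_map_eq_expMeasure one_pos (hEmeas _) (hlaw _)
          (by linarith))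
        (fun k _ => mgf_neg_le_of_map_eq_expMeasure one_pos (hEmeas _) (hlaw _) hθ) ε
  have : Nonempty (Fin d) := ⟨⟨0, by omega⟩⟩
  calc Pr {ω | B ω ≤ ε} ≤ ∑ f : Fin m → Fin d, Pr {ω | ∑ k, E (pathVertex f k) ω ≤ ε} := by
        simp only [hB]; exact measure_iInf_le_le_sum _ ε
    _ ≤ ∑ f : Fin m → Fin d, ENNReal.ofReal (exp (θ * ε) * (1 / θ) ^ m) :=
        Finset.sum_le_sum fun f _ => hpath f
    _ = ENNReal.ofReal (exp (-(m : ℝ) / 2)) := by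
        rw [Finset.sum_const, Finset.card_univ, Fintype.card_fun, Fintype.card_fin,
          Fintype.card_fin, nsmul_eq_mul, ← ENNReal.ofReal_natCast,
          ← ENNReal.ofReal_mul (by positivity)]
        have hθε : θ * ε = m / 2 := by rw [hθ_def, hε_def]; field_simp
        have hdθ : (d : ℝ) * (1 / θ) = exp (-1) := by rw [hθ_def, exp_neg]; field_simp
        rw [Nat.cast_pow, mul_left_comm, ← mul_pow, hdθ, ← exp_nat_mul, hθε, ← exp_add]
        congr 2
        ring
end
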